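/- arXiv:2403.04494 — 2 statements merged into one kernel-verified Lean document; each statement's English description precedes it below -/
import Mathlib

section
/- Distance between two geodesics in H³ via unit normals: let y₁, y₃ be unit space-like vectors in R⁴ with y₁∘y₃ = −L₁₃ < −1, and let v₁, v₃ ∈ H³ satisfy v₁∘y₁ = 0, v₃∘y₃ = 0, with v₁∘v₃, v₁∘y₃, y₁∘v₃ given by v₁∘v₃ = −(L₁₂L₁₃L₃₄ + L₂₃L₃₄ + L₁₂L₁₄ + L₂₄)/√((L₁₂²−1)(L₃₄²−1)), v₁∘y₃ = −(L₁₂L₁₃ + L₂₃)/√(L₁₂²−1), y₁∘v₃ = −(L₁₃L₃₄ + L₁₄)/√(L₃₄²−1), where all L_{ij} > 1. Then the function D(s,t) = −(cosh s·v₁ − sinh s·y₁)∘(cosh t·v₃ − sinh t·y₃) satisfies D(s,t) → ∞ as |s| + |t| → ∞, and D has a unique critical point on R², at which it attains its absolute minimum. -/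
open Real Filter

lemma abs_le_cosh' (x : ℝ) : |x| ≤ Real.cosh x := by
  have h : Real.exp x = Real.exp (x/2) * Real.exp (x/2) := by
    rw [← Real.exp_add]; ring_nf
  have h' : Real.exp (-x) = Real.exp (-x/2) * Real.exp (-x/2) := by
    rw [← Real.exp_add]; ring_nf
  rw [Real.cosh_eq]
  rcases abs_cases x with ⟨he, _⟩ | ⟨he, _⟩ <;> rw [he] <;>
    nlinarith [Real.add_one_le_exp (x/2), Real.add_one_le_exp (-x/2),
      Real.exp_pos x, Real.exp_pos (-x), sq_nonneg (1 - x/2), sq_nonneg (1 + x/2)]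

lemma sq_sub_one_pos {x : ℝ} (hx : 1 < x) : 0 < x ^ 2 - 1 := by nlinarith

lemma pos_factor {x y : ℝ} (h : 0 < x * y) (hy : 0 < y) : 0 < x := by
  by_contra hx
  push_neg at hx
  nlinarith

lemma key_lemma (E F u₀ w₀ : ℝ) (hE : 0 < E) (hF : 0 < F) (D : ℝ × ℝ → ℝ)
    (hD : ∀ p : ℝ × ℝ, D p = E * Real.cosh (p.1 + p.2 - u₀) + F * Real.cosh (p.2 - p.1 - w₀)) :
    Filter.Tendsto D (Filter.cocompact (ℝ × ℝ)) Filter.atTop ∧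
    ∃ p₀ : ℝ × ℝ, fderiv ℝ D p₀ = 0 ∧
      (∀ p : ℝ × ℝ, fderiv ℝ D p = 0 → p = p₀) ∧
      (∀ p : ℝ × ℝ, D p₀ ≤ D p) := by
  have hDe : D = fun p : ℝ × ℝ =>
      E * Real.cosh (p.1 + p.2 - u₀) + F * Real.cosh (p.2 - p.1 - w₀) := funext hD
  subst hDe
  set c : ℝ := min E F with hc
  have hcpos : 0 < c := lt_min hE hF
  constructor
  · -- properness
    have hbound : ∀ p : ℝ × ℝ,
        c * ‖p‖ + (-(c * (|u₀| + |w₀|))) ≤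
        E * Real.cosh (p.1 + p.2 - u₀) + F * Real.cosh (p.2 - p.1 - w₀) := by
      intro p
      have h1 : |p.1 + p.2 - u₀| ≤ Real.cosh (p.1 + p.2 - u₀) := abs_le_cosh' _
      have h2 : |p.2 - p.1 - w₀| ≤ Real.cosh (p.2 - p.1 - w₀) := abs_le_cosh' _
      have h3 : c ≤ E := min_le_left _ _
      have h4 : c ≤ F := min_le_right _ _
      have h5 : (1:ℝ) ≤ Real.cosh (p.1 + p.2 - u₀) := Real.one_le_cosh _
      have h6 : (1:ℝ) ≤ Real.cosh (p.2 - p.1 - w₀) := Real.one_le_cosh _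
      have hn : ‖p‖ = max |p.1| |p.2| := by
        rw [Prod.norm_def]; simp [Real.norm_eq_abs]
      have h7 : ‖p‖ ≤ |p.1 + p.2| + |p.2 - p.1| := by
        rw [hn]
        rcases max_cases |p.1| |p.2| with ⟨he, _⟩ | ⟨he, _⟩ <;> rw [he] <;>
          cases abs_cases p.1 <;> cases abs_cases p.2 <;>
          cases abs_cases (p.1 + p.2) <;> cases abs_cases (p.2 - p.1) <;> linarith
      have h8 : |p.1 + p.2| - |u₀| ≤ |p.1 + p.2 - u₀| := by
        have := abs_sub_abs_le_abs_sub (p.1 + p.2) u₀; linarith [abs_abs u₀]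
      have h9 : |p.2 - p.1| - |w₀| ≤ |p.2 - p.1 - w₀| := by
        have := abs_sub_abs_le_abs_sub (p.2 - p.1) w₀; linarith
      nlinarith [abs_nonneg (p.1 + p.2 - u₀), abs_nonneg (p.2 - p.1 - w₀)]
    refine Filter.tendsto_atTop_mono hbound ?_
    exact Filter.tendsto_atTop_add_const_right _ _
      (tendsto_norm_cocompact_atTop.const_mul_atTop hcpos)
  · -- critical point analysis
    set φ₁ : ℝ × ℝ →L[ℝ] ℝ :=
      ContinuousLinearMap.fst ℝ ℝ ℝ + ContinuousLinearMap.snd ℝ ℝ ℝ with hφ₁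
    set φ₂ : ℝ × ℝ →L[ℝ] ℝ :=
      ContinuousLinearMap.snd ℝ ℝ ℝ - ContinuousLinearMap.fst ℝ ℝ ℝ with hφ₂
    have hderiv : ∀ p : ℝ × ℝ, HasFDerivAt
        (fun p : ℝ × ℝ => E * Real.cosh (p.1 + p.2 - u₀) + F * Real.cosh (p.2 - p.1 - w₀))
        (E • (Real.sinh (p.1 + p.2 - u₀) • φ₁) + F • (Real.sinh (p.2 - p.1 - w₀) • φ₂)) p := by
      intro p
      have h1 : HasFDerivAt (fun p : ℝ × ℝ => p.1 + p.2 - u₀) φ₁ p :=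
        (hasFDerivAt_fst.add hasFDerivAt_snd).sub_const u₀
      have h2 : HasFDerivAt (fun p : ℝ × ℝ => p.2 - p.1 - w₀) φ₂ p :=
        (hasFDerivAt_snd.sub hasFDerivAt_fst).sub_const w₀
      have h3 := ((Real.hasDerivAt_cosh _).comp_hasFDerivAt p h1).const_mul E
      have h4 := ((Real.hasDerivAt_cosh _).comp_hasFDerivAt p h2).const_mul F
      exact h3.add h4
    refine ⟨((u₀ - w₀)/2, (u₀ + w₀)/2), ?_, ?_, ?_⟩
    · have h := (hderiv ((u₀ - w₀)/2, (u₀ + w₀)/2)).fderiv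
      rw [h]
      have e1 : (u₀ - w₀)/2 + (u₀ + w₀)/2 - u₀ = 0 := by ring
      have e2 : (u₀ + w₀)/2 - (u₀ - w₀)/2 - w₀ = 0 := by ring
      simp [e1, e2]
    · intro p hp
      have h := (hderiv p).fderiv
      rw [hp] at h
      have h1 := congrArg (fun L : ℝ × ℝ →L[ℝ] ℝ => L (1, 1)) h.symm
      have h2 := congrArg (fun L : ℝ × ℝ →L[ℝ] ℝ => L (-1, 1)) h.symm
      simp [hφ₁, hφ₂] at h1 h2
      have e1 : p.1 + p.2 - u₀ = 0 := by
        rcases h1 with h1 | h1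
        · exact absurd h1 (ne_of_gt hE)
        · exact h1
      have e2 : p.2 - p.1 - w₀ = 0 := by
        rcases h2 with h2 | h2
        · exact absurd h2 (ne_of_gt hF)
        · exact h2
      have : p = (p.1, p.2) := rfl
      rw [this, Prod.mk.injEq]
      constructor <;> linarith
    · intro p
      have e1 : (u₀ - w₀)/2 + (u₀ + w₀)/2 - u₀ = 0 := by ring
      have e2 : (u₀ + w₀)/2 - (u₀ - w₀)/2 - w₀ = 0 := by ring
      simp only [e1, e2, Real.cosh_zero, mul_one]
      nlinarith [Real.one_le_cosh (p.1 + p.2 - u₀), Real.one_le_cosh (p.2 - p.1 - w₀)]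

lemma reduce_lemma (P Q R S : ℝ) (hPQ : Q < P) (hPQ' : -P < Q) (hRS : S < R) (hRS' : -R < S)
    (D : ℝ × ℝ → ℝ)
    (hD : ∀ p : ℝ × ℝ, D p = (P * Real.cosh (p.1 + p.2) - Q * Real.sinh (p.1 + p.2)
      + R * Real.cosh (p.2 - p.1) + S * Real.sinh (p.2 - p.1)) / 2) :
    Filter.Tendsto D (Filter.cocompact (ℝ × ℝ)) Filter.atTop ∧
    ∃ p₀ : ℝ × ℝ, fderiv ℝ D p₀ = 0 ∧
      (∀ p : ℝ × ℝ, fderiv ℝ D p = 0 → p = p₀) ∧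
      (∀ p : ℝ × ℝ, D p₀ ≤ D p) := by
  have hP : 0 < P := by linarith
  have hR : 0 < R := by linarith
  set E : ℝ := Real.sqrt ((P - Q) * (P + Q)) with hEdef
  set F : ℝ := Real.sqrt ((R - S) * (R + S)) with hFdef
  have hE : 0 < E := Real.sqrt_pos.mpr (by nlinarith)
  have hF : 0 < F := Real.sqrt_pos.mpr (by nlinarith)
  have hE2 : E ^ 2 = P ^ 2 - Q ^ 2 := by
    rw [hEdef, Real.sq_sqrt (by nlinarith)]; ring
  have hF2 : F ^ 2 = R ^ 2 - S ^ 2 := by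
    rw [hFdef, Real.sq_sqrt (by nlinarith)]; ring
  set u₀ : ℝ := Real.arsinh (Q / E) with hu₀
  set w₀ : ℝ := Real.arsinh (-S / F) with hw₀
  have hsu : Real.sinh u₀ = Q / E := Real.sinh_arsinh _
  have hsw : Real.sinh w₀ = -S / F := Real.sinh_arsinh _
  have hcu : Real.cosh u₀ = P / E := by
    rw [hu₀, Real.cosh_arsinh]
    have h1 : 1 + (Q / E) ^ 2 = (P / E) ^ 2 := by
      field_simp; nlinarith
    rw [h1, Real.sqrt_sq (by positivity)]
  have hcw : Real.cosh w₀ = R / F := by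
    rw [hw₀, Real.cosh_arsinh]
    have h1 : 1 + (-S / F) ^ 2 = (R / F) ^ 2 := by
      field_simp; nlinarith
    rw [h1, Real.sqrt_sq (by positivity)]
  refine key_lemma (E / 2) (F / 2) u₀ w₀ (by linarith) (by linarith) D ?_
  intro p
  rw [hD p]
  simp only [Real.cosh_sub, Real.sinh_sub, hcu, hsu, hcw, hsw]
  field_simp
  ring

/-- The Lorentzian inner product on `ℝ⁴`. -/
def lprod (x y : Fin 4 → ℝ) : ℝ :=
  -(x 0 * y 0) + x 1 * y 1 + x 2 * y 2 + x 3 * y 3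

/-- The distance function between two common-perpendicular geodesics of a
truncated tetrahedron is proper and has a unique critical point, its absolute
minimum. -/
theorem transversal_distance_function {y₁ y₃ v₁ v₃ : Fin 4 → ℝ}
    {L₁₂ L₁₃ L₁₄ L₂₃ L₂₄ L₃₄ : ℝ}
    (h12 : 1 < L₁₂) (h13 : 1 < L₁₃) (h14 : 1 < L₁₄)
    (h23 : 1 < L₂₃) (h24 : 1 < L₂₄) (h34 : 1 < L₃₄)
    (hy₁ : lprod y₁ y₁ = 1) (hy₃ : lprod y₃ y₃ = 1)
    (hy₁y₃ : lprod y₁ y₃ = -L₁₃)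
    (hv₁H : lprod v₁ v₁ = -1) (hv₁pos : 0 < v₁ 0)
    (hv₃H : lprod v₃ v₃ = -1) (hv₃pos : 0 < v₃ 0)
    (hv₁y₁ : lprod v₁ y₁ = 0) (hv₃y₃ : lprod v₃ y₃ = 0)
    (hvv : lprod v₁ v₃ = -(L₁₂ * L₁₃ * L₃₄ + L₂₃ * L₃₄ + L₁₂ * L₁₄ + L₂₄) /
      Real.sqrt ((L₁₂ ^ 2 - 1) * (L₃₄ ^ 2 - 1)))
    (hvy : lprod v₁ y₃ = -(L₁₂ * L₁₃ + L₂₃) / Real.sqrt (L₁₂ ^ 2 - 1))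
    (hyv : lprod y₁ v₃ = -(L₁₃ * L₃₄ + L₁₄) / Real.sqrt (L₃₄ ^ 2 - 1))
    (D : ℝ × ℝ → ℝ)
    (hD : ∀ p : ℝ × ℝ, D p =
      -lprod (Real.cosh p.1 • v₁ - Real.sinh p.1 • y₁)
             (Real.cosh p.2 • v₃ - Real.sinh p.2 • y₃)) :
    Filter.Tendsto D (Filter.cocompact (ℝ × ℝ)) Filter.atTop ∧
    ∃ p₀ : ℝ × ℝ, fderiv ℝ D p₀ = 0 ∧
      (∀ p : ℝ × ℝ, fderiv ℝ D p = 0 → p = p₀) ∧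
      (∀ p : ℝ × ℝ, D p₀ ≤ D p) := by
  set a : ℝ := Real.sqrt (L₁₂ ^ 2 - 1) with hadef
  set b : ℝ := Real.sqrt (L₃₄ ^ 2 - 1) with hbdef
  have hapos : 0 < a := Real.sqrt_pos.mpr (sq_sub_one_pos h12)
  have hbpos : 0 < b := Real.sqrt_pos.mpr (sq_sub_one_pos h34)
  have halt : a < L₁₂ := by
    rw [hadef]
    calc Real.sqrt (L₁₂ ^ 2 - 1) < Real.sqrt (L₁₂ ^ 2) :=
          Real.sqrt_lt_sqrt (le_of_lt (sq_sub_one_pos h12)) (by linarith)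
      _ = L₁₂ := by rw [Real.sqrt_sq (by linarith)]
  have hblt : b < L₃₄ := by
    rw [hbdef]
    calc Real.sqrt (L₃₄ ^ 2 - 1) < Real.sqrt (L₃₄ ^ 2) :=
          Real.sqrt_lt_sqrt (le_of_lt (sq_sub_one_pos h34)) (by linarith)
      _ = L₃₄ := by rw [Real.sqrt_sq (by linarith)]
  have hvv' : lprod v₁ v₃ =
      -(L₁₂ * L₁₃ * L₃₄ + L₂₃ * L₃₄ + L₁₂ * L₁₄ + L₂₄) / (a * b) := by
    rw [hvv, Real.sqrt_mul (le_of_lt (sq_sub_one_pos h12))]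
  clear_value a b
  set A : ℝ := (L₁₂ * L₁₃ * L₃₄ + L₂₃ * L₃₄ + L₁₂ * L₁₄ + L₂₄) / (a * b) with hAdef
  set B : ℝ := (L₁₂ * L₁₃ + L₂₃) / a with hBdef
  set C : ℝ := (L₁₃ * L₃₄ + L₁₄) / b with hCdef
  clear_value A B C
  have hDform : ∀ p : ℝ × ℝ, D p =
      A * (Real.cosh p.1 * Real.cosh p.2) - B * (Real.cosh p.1 * Real.sinh p.2)
      - C * (Real.sinh p.1 * Real.cosh p.2) + L₁₃ * (Real.sinh p.1 * Real.sinh p.2) := by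
    intro p
    rw [hD p]
    simp only [lprod, Pi.sub_apply, Pi.smul_apply, smul_eq_mul] at hvv' hvy hyv hy₁y₃ ⊢
    linear_combination (- Real.cosh p.1 * Real.cosh p.2) * hvv'
      + (Real.cosh p.1 * Real.sinh p.2) * hvy
      + (Real.sinh p.1 * Real.cosh p.2) * hyv
      + (- Real.sinh p.1 * Real.sinh p.2) * hy₁y₃
      + (- Real.cosh p.1 * Real.cosh p.2) * hAdef
      + (Real.cosh p.1 * Real.sinh p.2) * hBdef
      + (Real.sinh p.1 * Real.cosh p.2) * hCdef
  set P : ℝ := A + L₁₃ with hPdef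
  set Q : ℝ := B + C with hQdef
  set R : ℝ := A - L₁₃ with hRdef
  set S : ℝ := C - B with hSdef
  clear_value P Q R S
  have hab : 0 < a * b := mul_pos hapos hbpos
  have hAab : A * (a * b) = L₁₂ * L₁₃ * L₃₄ + L₂₃ * L₃₄ + L₁₂ * L₁₄ + L₂₄ := by
    rw [hAdef]; exact div_mul_cancel₀ _ (ne_of_gt hab)
  have hBa : B * a = L₁₂ * L₁₃ + L₂₃ := by
    rw [hBdef]; exact div_mul_cancel₀ _ (ne_of_gt hapos)
  have hCb : C * b = L₁₃ * L₃₄ + L₁₄ := by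
    rw [hCdef]; exact div_mul_cancel₀ _ (ne_of_gt hbpos)
  have key1 : (P - Q) * (a * b) =
      L₁₃ * ((L₁₂ - a) * (L₃₄ - b)) + L₂₃ * (L₃₄ - b) + L₁₄ * (L₁₂ - a) + L₂₄ := by
    have : (P - Q) * (a * b) = A * (a * b) + L₁₃ * (a * b) - (B * a) * b - (C * b) * a := by
      rw [hPdef, hQdef]; ring
    rw [this, hAab, hBa, hCb]; ring
  have key2 : (R - S) * (a * b) =
      L₁₃ * ((L₁₂ - a) * (L₃₄ + b)) + L₂₃ * (L₃₄ + b) + L₁₄ * (L₁₂ - a) + L₂₄ := by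
    have : (R - S) * (a * b) = A * (a * b) - L₁₃ * (a * b) + (B * a) * b - (C * b) * a := by
      rw [hRdef, hSdef]; ring
    rw [this, hAab, hBa, hCb]; ring
  have key3 : (R + S) * (a * b) =
      L₁₃ * ((L₁₂ + a) * (L₃₄ - b)) + L₂₃ * (L₃₄ - b) + L₁₄ * (L₁₂ + a) + L₂₄ := by
    have : (R + S) * (a * b) = A * (a * b) - L₁₃ * (a * b) - (B * a) * b + (C * b) * a := by
      rw [hRdef, hSdef]; ring
    rw [this, hAab, hBa, hCb]; ring
  have hpos1 : 0 < (P - Q) * (a * b) := by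
    rw [key1]
    have h1 : 0 < L₁₂ - a := by linarith
    have h2 : 0 < L₃₄ - b := by linarith
    have t1 : 0 < L₁₃ * ((L₁₂ - a) * (L₃₄ - b)) := mul_pos (by linarith) (mul_pos h1 h2)
    have t2 : 0 < L₂₃ * (L₃₄ - b) := mul_pos (by linarith) h2
    have t3 : 0 < L₁₄ * (L₁₂ - a) := mul_pos (by linarith) h1
    linarith
  have hpos2 : 0 < (R - S) * (a * b) := by
    rw [key2]
    have h1 : 0 < L₁₂ - a := by linarith
    have h2 : 0 < L₃₄ + b := by linarith
    have t1 : 0 < L₁₃ * ((L₁₂ - a) * (L₃₄ + b)) := mul_pos (by linarith) (mul_pos h1 h2)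
    have t2 : 0 < L₂₃ * (L₃₄ + b) := mul_pos (by linarith) h2
    have t3 : 0 < L₁₄ * (L₁₂ - a) := mul_pos (by linarith) h1
    linarith
  have hpos3 : 0 < (R + S) * (a * b) := by
    rw [key3]
    have h1 : 0 < L₁₂ + a := by linarith
    have h2 : 0 < L₃₄ - b := by linarith
    have t1 : 0 < L₁₃ * ((L₁₂ + a) * (L₃₄ - b)) := mul_pos (by linarith) (mul_pos h1 h2)
    have t2 : 0 < L₂₃ * (L₃₄ - b) := mul_pos (by linarith) h2
    have t3 : 0 < L₁₄ * (L₁₂ + a) := mul_pos (by linarith) h1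
    linarith
  have hPQ : Q < P := sub_pos.mp (pos_factor hpos1 hab)
  have hRS : S < R := sub_pos.mp (pos_factor hpos2 hab)
  have hRS' : -R < S := by
    have := pos_factor hpos3 hab
    linarith
  have hQpos : 0 < Q := by
    rw [hQdef, hBdef, hCdef]
    have t1 : 0 < (L₁₂ * L₁₃ + L₂₃) / a :=
      div_pos (add_pos (mul_pos (by linarith) (by linarith)) (by linarith)) hapos
    have t2 : 0 < (L₁₃ * L₃₄ + L₁₄) / b :=
      div_pos (add_pos (mul_pos (by linarith) (by linarith)) (by linarith)) hbpos
    linarith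
  have hPQ' : -P < Q := by linarith
  refine reduce_lemma P Q R S hPQ hPQ' hRS hRS' D ?_
  intro p
  rw [hDform p]
  simp only [Real.cosh_add, Real.sinh_add, Real.cosh_sub, Real.sinh_sub, hPdef, hQdef,
    hRdef, hSdef]
  ring
end

section
/- Symmetric transversal computation: fix L > 1 and x, y > 1. Let y₁, y₃ be unit space-like vectors in R⁴ and v₁, v₃ points of H³ with y₁∘y₃ = −L, v₁∘y₁ = 0 = v₃∘y₃, v₁∘v₃ = −L√((x+1)(y+1)/((x−1)(y−1))), v₁∘y₃ = −L√((x+1)/(x−1)), y₁∘v₃ = −L√((y+1)/(y−1)). Then the function D(s,t) = −(cosh s·v₁ − sinh s·y₁)∘(cosh t·v₃ − sinh t·y₃) has its unique critical point at (s₀,t₀) with cosh s₀ = √((x+1)/2), cosh t₀ = √((y+1)/2), and its minimum value is D(s₀,t₀) = 2L/√((x−1)(y−1)). -/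
open Real

lemma lprod_smul_sub_smul (u w p q : Fin 4 → ℝ) (c d e f : ℝ) :
    lprod (c • u - d • w) (e • p - f • q) =
      c * e * lprod u p - c * f * lprod u q - d * e * lprod w p + d * f * lprod w q := by
  simp only [lprod, Pi.smul_apply, Pi.sub_apply, smul_eq_mul]
  ring

lemma exists_cosh_sinh_half {x : ℝ} (hx : 1 < x) :
    ∃ r : ℝ, cosh r = √((x + 1) / 2) ∧ sinh r = √((x - 1) / 2) := by
  refine ⟨arsinh √((x - 1) / 2), ?_, sinh_arsinh _⟩
  rw [cosh_arsinh, sq_sqrt (by linarith)]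
  ring_nf

lemma sqrt_div_eq_cosh_div_sinh {x r : ℝ} (hx : 1 < x)
    (hcr : cosh r = √((x + 1) / 2)) (hsr : sinh r = √((x - 1) / 2)) :
    √((x + 1) / (x - 1)) = cosh r / sinh r := by
  rw [hcr, hsr, ← sqrt_div (by linarith)]
  congr 1
  field_simp

lemma coth_mul_cosh_sub_sinh {r : ℝ} (hr : sinh r ≠ 0) (s : ℝ) :
    cosh r / sinh r * cosh s - sinh s = cosh (s - r) / sinh r := by
  rw [cosh_sub]
  field_simp

noncomputable def coshProd (K r q : ℝ) (p : ℝ × ℝ) : ℝ :=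
  K * (cosh (p.1 - r) * cosh (p.2 - q))

namespace coshProd

variable {K r q : ℝ}

lemma hasFDerivAt (p : ℝ × ℝ) :
    HasFDerivAt (coshProd K r q)
      (K • (cosh (p.1 - r) • sinh (p.2 - q) • ContinuousLinearMap.snd ℝ ℝ ℝ +
        cosh (p.2 - q) • sinh (p.1 - r) • ContinuousLinearMap.fst ℝ ℝ ℝ)) p := by
  have h₁ : HasFDerivAt (fun p : ℝ × ℝ => cosh (p.1 - r))
      (sinh (p.1 - r) • ContinuousLinearMap.fst ℝ ℝ ℝ) p :=
    ((hasDerivAt_cosh _).comp _ ((hasDerivAt_id _).sub_const r)).comp_hasFDerivAt p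
      hasFDerivAt_fst |>.congr_fderiv (by simp)
  have h₂ : HasFDerivAt (fun p : ℝ × ℝ => cosh (p.2 - q))
      (sinh (p.2 - q) • ContinuousLinearMap.snd ℝ ℝ ℝ) p :=
    ((hasDerivAt_cosh _).comp _ ((hasDerivAt_id _).sub_const q)).comp_hasFDerivAt p
      hasFDerivAt_snd |>.congr_fderiv (by simp)
  exact (h₁.mul h₂).const_mul K

lemma fderiv_eq_zero_iff (hK : K ≠ 0) {p : ℝ × ℝ} :
    fderiv ℝ (coshProd K r q) p = 0 ↔ p = (r, q) := by
  rw [(hasFDerivAt p).fderiv]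
  constructor
  · intro h
    have h₁ : p.1 - r = 0 := by
      simpa [hK, (cosh_pos _).ne'] using DFunLike.congr_fun h (1, 0)
    have h₂ : p.2 - q = 0 := by
      simpa [hK, (cosh_pos _).ne'] using DFunLike.congr_fun h (0, 1)
    ext <;> linarith
  · rintro rfl
    simp

lemma apply_self : coshProd K r q (r, q) = K := by
  simp [coshProd]

lemma le_apply (hK : 0 ≤ K) (p : ℝ × ℝ) : K ≤ coshProd K r q p :=
  le_mul_of_one_le_right hK (one_le_mul_of_one_le_of_one_le (one_le_cosh _) (one_le_cosh _))

end coshProd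

lemma neg_lprod_eq_coshProd {v₁ y₁ v₃ y₃ : Fin 4 → ℝ} {L r q : ℝ}
    (hr : sinh r ≠ 0) (hq : sinh q ≠ 0) (hy₁y₃ : lprod y₁ y₃ = -L)
    (hvv : lprod v₁ v₃ = -L * (cosh r / sinh r * (cosh q / sinh q)))
    (hvy : lprod v₁ y₃ = -L * (cosh r / sinh r))
    (hyv : lprod y₁ v₃ = -L * (cosh q / sinh q))
    (p : ℝ × ℝ) :
    -lprod (cosh p.1 • v₁ - sinh p.1 • y₁) (cosh p.2 • v₃ - sinh p.2 • y₃) =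
      coshProd (L / (sinh r * sinh q)) r q p :=
  calc _ = L * ((cosh r / sinh r * cosh p.1 - sinh p.1) *
        (cosh q / sinh q * cosh p.2 - sinh p.2)) := by
        rw [lprod_smul_sub_smul, hvv, hvy, hyv, hy₁y₃]
        ring
    _ = coshProd (L / (sinh r * sinh q)) r q p := by
        rw [coth_mul_cosh_sub_sinh hr, coth_mul_cosh_sub_sinh hq, coshProd]
        field_simp

theorem symmetric_transversal_general {y₁ y₃ v₁ v₃ : Fin 4 → ℝ} {L x y : ℝ}
    (hL : 1 < L) (hx : 1 < x) (hy : 1 < y)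
    (hy₁y₃ : lprod y₁ y₃ = -L)
    (hvv : lprod v₁ v₃ = -L * Real.sqrt ((x + 1) * (y + 1) / ((x - 1) * (y - 1))))
    (hvy : lprod v₁ y₃ = -L * Real.sqrt ((x + 1) / (x - 1)))
    (hyv : lprod y₁ v₃ = -L * Real.sqrt ((y + 1) / (y - 1)))
    (D : ℝ × ℝ → ℝ)
    (hD : ∀ p : ℝ × ℝ, D p =
      -lprod (Real.cosh p.1 • v₁ - Real.sinh p.1 • y₁)
             (Real.cosh p.2 • v₃ - Real.sinh p.2 • y₃)) :
    ∃ s₀ t₀ : ℝ,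
      Real.cosh s₀ = Real.sqrt ((x + 1) / 2) ∧
      Real.cosh t₀ = Real.sqrt ((y + 1) / 2) ∧
      fderiv ℝ D (s₀, t₀) = 0 ∧
      (∀ p : ℝ × ℝ, fderiv ℝ D p = 0 → p = (s₀, t₀)) ∧
      (∀ p : ℝ × ℝ, D (s₀, t₀) ≤ D p) ∧
      D (s₀, t₀) = 2 * L / Real.sqrt ((x - 1) * (y - 1)) := by
  obtain ⟨r, hcr, hsr⟩ := exists_cosh_sinh_half hx
  obtain ⟨q, hcq, hsq⟩ := exists_cosh_sinh_half hy
  have hr : 0 < sinh r := hsr ▸ sqrt_pos.2 (by linarith)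
  have hq : 0 < sinh q := hsq ▸ sqrt_pos.2 (by linarith)
  have hcoth_r := sqrt_div_eq_cosh_div_sinh hx hcr hsr
  have hcoth_q := sqrt_div_eq_cosh_div_sinh hy hcq hsq
  have hcoth_rq : √((x + 1) * (y + 1) / ((x - 1) * (y - 1))) =
      cosh r / sinh r * (cosh q / sinh q) := by
    rw [mul_div_mul_comm, sqrt_mul (div_nonneg (by linarith) (by linarith)), hcoth_r, hcoth_q]
  obtain rfl : D = coshProd (L / (sinh r * sinh q)) r q := funext fun p =>
    (hD p).trans <| neg_lprod_eq_coshProd hr.ne' hq.ne' hy₁y₃ (hcoth_rq ▸ hvv)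
      (hcoth_r ▸ hvy) (hcoth_q ▸ hyv) p
  have hK : 0 < L / (sinh r * sinh q) := by positivity
  refine ⟨r, q, hcr, hcq, (coshProd.fderiv_eq_zero_iff hK.ne').2 rfl,
    fun p => (coshProd.fderiv_eq_zero_iff hK.ne').1, fun p => ?_, ?_⟩
  · exact coshProd.apply_self ▸ coshProd.le_apply hK.le p
  · have : √((x - 1) * (y - 1)) = 2 * (sinh r * sinh q) := by
      rw [hsr, hsq, ← sqrt_mul (by linarith), ← sqrt_mul_self zero_le_two,
        ← sqrt_mul (by norm_num)]
      ring_nf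
    rw [coshProd.apply_self, this, mul_div_mul_left _ _ two_ne_zero]

/-- Symmetric transversal computation: when the four side pairings all equal
`L`, the distance function has its unique critical point at
`(s₀, t₀)` with `cosh s₀ = √((x+1)/2)`, `cosh t₀ = √((y+1)/2)`, and its
minimum value is `2L/√((x−1)(y−1))`. -/
theorem symmetric_transversal {y₁ y₃ v₁ v₃ : Fin 4 → ℝ} {L x y : ℝ}
    (hL : 1 < L) (hx : 1 < x) (hy : 1 < y)
    (hy₁ : lprod y₁ y₁ = 1) (hy₃ : lprod y₃ y₃ = 1)
    (hy₁y₃ : lprod y₁ y₃ = -L)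
    (hv₁H : lprod v₁ v₁ = -1) (hv₁pos : 0 < v₁ 0)
    (hv₃H : lprod v₃ v₃ = -1) (hv₃pos : 0 < v₃ 0)
    (hv₁y₁ : lprod v₁ y₁ = 0) (hv₃y₃ : lprod v₃ y₃ = 0)
    (hvv : lprod v₁ v₃ = -L * Real.sqrt ((x + 1) * (y + 1) / ((x - 1) * (y - 1))))
    (hvy : lprod v₁ y₃ = -L * Real.sqrt ((x + 1) / (x - 1)))
    (hyv : lprod y₁ v₃ = -L * Real.sqrt ((y + 1) / (y - 1)))
    (D : ℝ × ℝ → ℝ)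
    (hD : ∀ p : ℝ × ℝ, D p =
      -lprod (Real.cosh p.1 • v₁ - Real.sinh p.1 • y₁)
             (Real.cosh p.2 • v₃ - Real.sinh p.2 • y₃)) :
    ∃ s₀ t₀ : ℝ,
      Real.cosh s₀ = Real.sqrt ((x + 1) / 2) ∧
      Real.cosh t₀ = Real.sqrt ((y + 1) / 2) ∧
      fderiv ℝ D (s₀, t₀) = 0 ∧
      (∀ p : ℝ × ℝ, fderiv ℝ D p = 0 → p = (s₀, t₀)) ∧
      (∀ p : ℝ × ℝ, D (s₀, t₀) ≤ D p) ∧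
      D (s₀, t₀) = 2 * L / Real.sqrt ((x - 1) * (y - 1)) :=
  symmetric_transversal_general hL hx hy hy₁y₃ hvv hvy hyv D hD
end
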